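/- Let (R, d) be a divisive meadow. Then the following equations hold for all x, y, z, w ∈ R: d 1 0 = 0, d 1 1 = 1, d 1 (-x) = -(d 1 x), d 1 (x * y) = d 1 x * d 1 y, (d x y) * (d z w) = d (x * z) (y * w), and d (d x y) (d z w) = d (x * w) (y * z). -/

import Mathlib

/-! In a commutative ring, `b` is a pseudo-inverse of `a` when `a * a * b = a` and `b * b * a = b`.
Pseudo-inverses are unique, so taking them commutes with products and negation and fixes `0`, `1`.
The axioms of a divisive meadow say exactly that `d 1 x` is a pseudo-inverse of `x` and that
`d x y = x * d 1 y`, from which all the equations follow by ring arithmetic. -/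

namespace DivisiveMeadow

variable {R : Type*} [CommRing R]

def IsPseudoInverse (a b : R) : Prop :=
  a * a * b = a ∧ b * b * a = b

namespace IsPseudoInverse

variable {a b c a' b' : R}

theorem unique (hb : IsPseudoInverse a b) (hc : IsPseudoInverse a c) : b = c := by
  obtain ⟨hab, hb⟩ := hb
  obtain ⟨hac, hc⟩ := hc
  linear_combination hc - hb - (b ^ 2 + b * c) * hac + (c ^ 2 + b * c) * hab

theorem mul (h : IsPseudoInverse a b) (h' : IsPseudoInverse a' b') :
    IsPseudoInverse (a * a') (b * b') :=
  ⟨by linear_combination a * a * b * h'.1 + a' * h.1,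
    by linear_combination b * b * a * h'.2 + b' * h.2⟩

theorem neg (h : IsPseudoInverse a b) : IsPseudoInverse (-a) (-b) :=
  ⟨by linear_combination -h.1, by linear_combination -h.2⟩

end IsPseudoInverse

theorem isPseudoInverse_zero : IsPseudoInverse (0 : R) 0 := by
  simp [IsPseudoInverse]

theorem isPseudoInverse_one : IsPseudoInverse (1 : R) 1 := by
  simp [IsPseudoInverse]

section PseudoInverseMap

variable {i : R → R} (hi : ∀ x, IsPseudoInverse x (i x))
include hi

theorem map_zero_of_isPseudoInverse : i 0 = 0 :=
  (hi 0).unique isPseudoInverse_zero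

theorem map_one_of_isPseudoInverse : i 1 = 1 :=
  (hi 1).unique isPseudoInverse_one

theorem map_neg_of_isPseudoInverse (x : R) : i (-x) = -i x :=
  (hi (-x)).unique (hi x).neg

theorem map_mul_of_isPseudoInverse (x y : R) : i (x * y) = i x * i y :=
  (hi (x * y)).unique ((hi x).mul (hi y))

end PseudoInverseMap

theorem isPseudoInverse_of_involutive {i : R → R} (hinv : Function.Involutive i)
    (h : ∀ x, x * x * i x = x) (x : R) : IsPseudoInverse x (i x) :=
  ⟨h x, by simpa only [hinv x] using h (i x)⟩

end DivisiveMeadow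

open DivisiveMeadow in
theorem divisive_meadow_derived_equations {R : Type*} [CommRing R] (d : R → R → R)
    (h1 : ∀ x : R, d 1 (d 1 x) = x) (h2 : ∀ x : R, d (x * x) x = x)
    (h3 : ∀ x y : R, d x y = x * d 1 y) :
    d 1 0 = 0 ∧ d 1 1 = 1 ∧ (∀ x : R, d 1 (-x) = -(d 1 x)) ∧
      (∀ x y : R, d 1 (x * y) = d 1 x * d 1 y) ∧
      (∀ x y z w : R, d x y * d z w = d (x * z) (y * w)) ∧
      (∀ x y z w : R, d (d x y) (d z w) = d (x * w) (y * z)) := by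
  have hi : ∀ x, IsPseudoInverse x (d 1 x) :=
    isPseudoInverse_of_involutive h1 fun x => (h3 (x * x) x).symm.trans (h2 x)
  have hmul := map_mul_of_isPseudoInverse hi
  refine ⟨map_zero_of_isPseudoInverse hi, map_one_of_isPseudoInverse hi,
    map_neg_of_isPseudoInverse hi, hmul, fun x y z w => ?_, fun x y z w => ?_⟩
  · rw [h3 x y, h3 z w, h3 (x * z), hmul]
    ring
  · rw [h3 x y, h3 z w, h3 (x * d 1 y), h3 (x * w), hmul, hmul, h1]
    ring
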